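/- arXiv:1601.02473 — 2 statements merged into one kernel-verified Lean document; each statement's English description precedes it below -/
import Mathlib

section
/- Let S be a local ring, f a nonzerodivisor in the maximal ideal of S, and R = S/(f). Suppose M is an R-module admitting a length-1 free resolution 0 → F_1 --A--> F_0 → M → 0 over S with F_0, F_1 finite free. Then there exists a map B: F_0 → F_1 with AB = f·id_{F_0} and BA = f·id_{F_1} (a matrix factorization of f), and M admits a 2-periodic free resolution ⋯ → R⊗F_1 → R⊗F_0 → R⊗F_1 → R⊗F_0 → M → 0 over R. -/
lemma mem_spanf_smul_top_iff {S : Type} [CommRing S] (f : S) {N : Type} [AddCommGroup N]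
    [Module S N] (x : N) :
    x ∈ (Ideal.span {f} • ⊤ : Submodule S N) ↔ ∃ y, f • y = x := by
  constructor
  · intro hx
    have hle : (Ideal.span {f} • ⊤ : Submodule S N) ≤
        LinearMap.range (f • (LinearMap.id : N →ₗ[S] N)) := by
      rw [Submodule.smul_le]
      intro r hr n _
      obtain ⟨s, rfl⟩ := Ideal.mem_span_singleton'.mp hr
      exact ⟨s • n, by simp [mul_comm, mul_smul, smul_comm f s n]⟩
    obtain ⟨y, hy⟩ := hle hx
    exact ⟨y, by simpa using hy⟩
  · rintro ⟨y, rfl⟩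
    exact Submodule.smul_mem_smul (Ideal.mem_span_singleton_self f) trivial

/-- **matrix factorizations.** Let `S` be a local ring, `f` a
nonzerodivisor in the maximal ideal, `R = S/(f)`, and `M` an `R`-module (an `S`-module
killed by `f`) with a length-1 finite free resolution `0 → F₁ --A--> F₀ --ε--> M → 0`
over `S`.  Then there is a map `B : F₀ → F₁` with `A ∘ B = f·id` and `B ∘ A = f·id`
(a matrix factorization of `f`), and reducing `A`, `B` mod `f` yields a 2-periodic free
resolution `⋯ → F₁/fF₁ → F₀/fF₀ → F₁/fF₁ → F₀/fF₀ → M → 0` over `R`. -/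
theorem stmt9 {S : Type} [CommRing S] [IsLocalRing S]
    (f : S) (hfm : f ∈ IsLocalRing.maximalIdeal S) (hreg : IsSMulRegular S f)
    (F₀ F₁ : Type) [AddCommGroup F₀] [Module S F₀] [AddCommGroup F₁] [Module S F₁]
    [Module.Free S F₀] [Module.Finite S F₀] [Module.Free S F₁] [Module.Finite S F₁]
    (M : Type) [AddCommGroup M] [Module S M] (hfM : ∀ x : M, f • x = 0)
    (A : F₁ →ₗ[S] F₀) (ε : F₀ →ₗ[S] M)
    (hε : Function.Surjective ε) (hAε : Function.Exact A ε)
    (hA : Function.Injective A) :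
    ∃ B : F₀ →ₗ[S] F₁,
      A ∘ₗ B = f • (LinearMap.id : F₀ →ₗ[S] F₀) ∧
      B ∘ₗ A = f • (LinearMap.id : F₁ →ₗ[S] F₁) ∧
      ∃ (Abar : (F₁ ⧸ (Ideal.span {f} • ⊤ : Submodule S F₁)) →ₗ[S]
            (F₀ ⧸ (Ideal.span {f} • ⊤ : Submodule S F₀)))
        (Bbar : (F₀ ⧸ (Ideal.span {f} • ⊤ : Submodule S F₀)) →ₗ[S]
            (F₁ ⧸ (Ideal.span {f} • ⊤ : Submodule S F₁)))
        (εbar : (F₀ ⧸ (Ideal.span {f} • ⊤ : Submodule S F₀)) →ₗ[S] M),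
        Abar ∘ₗ (Ideal.span {f} • ⊤ : Submodule S F₁).mkQ =
            (Ideal.span {f} • ⊤ : Submodule S F₀).mkQ ∘ₗ A ∧
        Bbar ∘ₗ (Ideal.span {f} • ⊤ : Submodule S F₀).mkQ =
            (Ideal.span {f} • ⊤ : Submodule S F₁).mkQ ∘ₗ B ∧
        εbar ∘ₗ (Ideal.span {f} • ⊤ : Submodule S F₀).mkQ = ε ∧
        Function.Surjective εbar ∧
        Function.Exact Abar εbar ∧
        Function.Exact Bbar Abar ∧
        Function.Exact Abar Bbar := by
  classical
  have hker : LinearMap.ker ε = LinearMap.range A := LinearMap.exact_iff.mp hAε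
  have hrange : ∀ x : F₀, f • x ∈ LinearMap.range A := by
    intro x
    rw [← hker, LinearMap.mem_ker, map_smul, hfM]
  -- f is regular on the free module F₀
  have hregF : ∀ {x y : F₀}, f • x = f • y → x = y := by
    intro x y h
    let b := Module.Free.chooseBasis S F₀
    apply b.repr.injective
    ext i
    apply hreg
    have := congrArg (fun z => b.repr z i) h
    simpa using this
  -- construct B
  let e : F₁ ≃ₗ[S] LinearMap.range A := LinearEquiv.ofInjective A hA
  let g : F₀ →ₗ[S] LinearMap.range A :=
    LinearMap.codRestrict _ (f • (LinearMap.id : F₀ →ₗ[S] F₀)) hrange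
  let B : F₀ →ₗ[S] F₁ := e.symm.toLinearMap ∘ₗ g
  have hAB : ∀ x : F₀, A (B x) = f • x := by
    intro x
    have h1 : (e (e.symm (g x)) : F₀) = (g x : F₀) := by rw [e.apply_symm_apply]
    have h2 : (e (e.symm (g x)) : F₀) = A (e.symm (g x)) :=
      LinearEquiv.ofInjective_apply A _
    have : A (B x) = (g x : F₀) := by
      simpa [B] using h2.symm.trans h1
    simpa [g] using this
  have hBA : ∀ x : F₁, B (A x) = f • x := by
    intro x
    apply hA
    rw [hAB, map_smul]
  set p₀ : Submodule S F₀ := Ideal.span {f} • ⊤ with hp₀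
  set p₁ : Submodule S F₁ := Ideal.span {f} • ⊤ with hp₁
  have hAle : p₁ ≤ p₀.comap A := by
    intro x hx
    obtain ⟨y, rfl⟩ := (mem_spanf_smul_top_iff f x).mp hx
    simpa [Submodule.mem_comap, map_smul] using (mem_spanf_smul_top_iff f (f • A y)).mpr ⟨A y, rfl⟩
  have hBle : p₀ ≤ p₁.comap B := by
    intro x hx
    obtain ⟨y, rfl⟩ := (mem_spanf_smul_top_iff f x).mp hx
    simpa [Submodule.mem_comap, map_smul] using (mem_spanf_smul_top_iff f (f • B y)).mpr ⟨B y, rfl⟩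
  have hεle : p₀ ≤ LinearMap.ker ε := by
    intro x hx
    obtain ⟨y, rfl⟩ := (mem_spanf_smul_top_iff f x).mp hx
    simp [LinearMap.mem_ker, map_smul, hfM]
  refine ⟨B, ?_, ?_, Submodule.mapQ p₁ p₀ A hAle, Submodule.mapQ p₀ p₁ B hBle,
      Submodule.liftQ p₀ ε hεle, ?_, ?_, ?_, ?_, ?_, ?_, ?_⟩
  · ext x; simpa using hAB x
  · ext x; simpa using hBA x
  · ext x; simp [Submodule.mapQ_apply]
  · ext x; simp [Submodule.mapQ_apply]
  · ext x; simp
  · -- εbar surjective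
    intro m
    obtain ⟨x, rfl⟩ := hε m
    exact ⟨p₀.mkQ x, by simp⟩
  · -- Exact Abar εbar
    intro y
    obtain ⟨x, rfl⟩ := p₀.mkQ_surjective y
    constructor
    · intro h
      have hx : ε x = 0 := by simpa using h
      obtain ⟨z, rfl⟩ := (hAε x).mp hx
      exact ⟨p₁.mkQ z, by simp [Submodule.mapQ]⟩
    · rintro ⟨z, hz⟩
      obtain ⟨w, rfl⟩ := p₁.mkQ_surjective z
      have : p₀.mkQ (A w) = p₀.mkQ x := by simpa [Submodule.mapQ] using hz
      calc Submodule.liftQ p₀ ε hεle (p₀.mkQ x)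
          = Submodule.liftQ p₀ ε hεle (p₀.mkQ (A w)) := by rw [this]
        _ = ε (A w) := by simp
        _ = 0 := (hAε (A w)).mpr ⟨w, rfl⟩
  · -- Exact Bbar Abar
    intro y
    obtain ⟨x, rfl⟩ := p₁.mkQ_surjective y
    constructor
    · intro h
      have hx : A x ∈ p₀ := by
        simpa [Submodule.mapQ, Submodule.Quotient.mk_eq_zero] using h
      obtain ⟨z, hz⟩ := (mem_spanf_smul_top_iff f (A x)).mp hx
      have : A (B z) = A x := by rw [hAB, hz]
      have hx' : B z = x := hA this
      exact ⟨p₀.mkQ z, by simp [Submodule.mapQ, hx']⟩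
    · rintro ⟨z, hz⟩
      obtain ⟨w, rfl⟩ := p₀.mkQ_surjective z
      have : p₁.mkQ (B w) = p₁.mkQ x := by simpa [Submodule.mapQ] using hz
      have h2 : Submodule.mapQ p₁ p₀ A hAle (p₁.mkQ (B w)) = 0 := by
        simp only [Submodule.mapQ_apply, Submodule.mkQ_apply, Submodule.Quotient.mk_eq_zero]
        rw [hAB]
        exact (mem_spanf_smul_top_iff f _).mpr ⟨w, rfl⟩
      rw [← this]; exact h2
  · -- Exact Abar Bbar
    intro y
    obtain ⟨x, rfl⟩ := p₀.mkQ_surjective y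
    constructor
    · intro h
      have hx : B x ∈ p₁ := by
        simpa [Submodule.mapQ, Submodule.Quotient.mk_eq_zero] using h
      obtain ⟨z, hz⟩ := (mem_spanf_smul_top_iff f (B x)).mp hx
      have : f • A z = f • x := by
        rw [← map_smul, hz, hAB]
      have hx' : A z = x := hregF this
      exact ⟨p₁.mkQ z, by simp [Submodule.mapQ, hx']⟩
    · rintro ⟨z, hz⟩
      obtain ⟨w, rfl⟩ := p₁.mkQ_surjective z
      have : p₀.mkQ (A w) = p₀.mkQ x := by simpa [Submodule.mapQ] using hz
      have h2 : Submodule.mapQ p₀ p₁ B hBle (p₀.mkQ (A w)) = 0 := by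
        simp only [Submodule.mapQ_apply, Submodule.mkQ_apply, Submodule.Quotient.mk_eq_zero]
        rw [hBA]
        exact (mem_spanf_smul_top_iff f _).mpr ⟨w, rfl⟩
      rw [← this]; exact h2
end

section
/- The graded ring A = ℚ[u,v,p]/(u², uv, up, p²) with |u|=|v|=2 and |p|=5 has Hilbert series p_X(t) = (1+t⁵)/(1−t²) + t², the radical of its maximal ideal of positive-degree elements equals the radical of the principal ideal (v), its zeroth local cohomology at the maximal ideal is H^0_m(A) = Σ²ℚ (one-dimensional in degree 2), and in particular A is not Cohen–Macaulay. -/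
set_option synthInstance.maxHeartbeats 1000000
set_option maxHeartbeats 1000000

open MvPolynomial

/-- The dimension of the degree-`n` homogeneous component (for the weighting `w` of the
variables) of the quotient of the polynomial ring `ℚ[u,v,p]` by a homogeneous ideal. -/
noncomputable def gradedPieceDim (I : Ideal (MvPolynomial (Fin 3) ℚ)) (w : Fin 3 → ℕ)
    (n : ℕ) : ℕ :=
  Module.finrank ℚ
    ((weightedHomogeneousSubmodule ℚ w n) ⧸
      (Submodule.comap (weightedHomogeneousSubmodule ℚ w n).subtype
        (Submodule.restrictScalars ℚ (I : Submodule (MvPolynomial (Fin 3) ℚ)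
          (MvPolynomial (Fin 3) ℚ)))))

/-- The defining ideal of `A = ℚ[u,v,p]/(u², uv, up, p²)`, `|u| = |v| = 2`, `|p| = 5`. -/
noncomputable def exIdeal : Ideal (MvPolynomial (Fin 3) ℚ) :=
  Ideal.span {(X 0 : MvPolynomial (Fin 3) ℚ) ^ 2, X 0 * X 1, X 0 * X 2,
    (X 2 : MvPolynomial (Fin 3) ℚ) ^ 2}

/-- The ring `A = ℚ[u,v,p]/(u², uv, up, p²)`. -/
noncomputable abbrev ExRing : Type := MvPolynomial (Fin 3) ℚ ⧸ exIdeal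

/-- The maximal ideal of positive-degree elements of `A`. -/
noncomputable def exMax : Ideal ExRing :=
  Ideal.span {Ideal.Quotient.mk exIdeal (X 0), Ideal.Quotient.mk exIdeal (X 1),
    Ideal.Quotient.mk exIdeal (X 2)}

/-- The `m`-power torsion submodule `Γ_m(A) = H^0_m(A)` of `A`. -/
noncomputable def exTorsion : Submodule ExRing ExRing :=
  ⨆ j : ℕ, Submodule.torsionBySet ExRing ExRing ((exMax ^ j : Ideal ExRing) : Set ExRing)

/-!
`exIdeal` is a monomial ideal, so `A` has the standard monomials `vᵏ`, `u`, `vᵏp` as a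
`ℚ`-basis; counting them by degree gives the Hilbert function `[2 ∣ n] + [n = 2] + [n odd, n ≥ 5]`,
whose generating function is a sum of two geometric series and `t²`. Since `u² = p² = 0`,
`rad m = rad (v)` and `A` has the same Krull dimension as its reduction `ℚ[v]`. Finally `m` kills
`u`, while `vʲ q ∈ exIdeal` forces every monomial of `q` other than `u` into `exIdeal`, so
`Γ_m(A) = ℚu` and every element of `m` is a zero divisor.
-/

section MonomialQuotient

variable {σ M : Type*} (K : Type*) [Field K] [AddCommMonoid M]

noncomputable def coeffsOn (w : σ → M) (n : M) (E : Finset (σ →₀ ℕ)) :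
    weightedHomogeneousSubmodule K w n →ₗ[K] (E → K) where
  toFun p m := coeff m p.1
  map_add' _ _ := by ext; simp
  map_smul' _ _ := by ext; simp

variable {K}

theorem coeffsOn_surjective (w : σ → M) (n : M) (E : Finset (σ →₀ ℕ))
    (hE : ∀ m ∈ E, Finsupp.weight w m = n) : Function.Surjective (coeffsOn K w n E) := by
  classical
  intro f
  refine ⟨⟨∑ m : E, monomial m (f m), Submodule.sum_mem _ fun m _ =>
    isWeightedHomogeneous_monomial _ _ _ (hE m m.2)⟩, ?_⟩
  ext m
  simp [coeffsOn, coeff_sum, coeff_monomial]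

theorem finrank_weightedHomogeneousSubmodule_quotient (w : σ → M) (n : M)
    (I : Ideal (MvPolynomial σ K)) (T : Set (σ →₀ ℕ)) (hI : ∀ p, p ∈ I ↔ ↑p.support ⊆ T)
    (E : Finset (σ →₀ ℕ)) (hE : ∀ m, m ∈ E ↔ m ∉ T ∧ Finsupp.weight w m = n) :
    Module.finrank K ((weightedHomogeneousSubmodule K w n) ⧸
      (Submodule.comap (weightedHomogeneousSubmodule K w n).subtype
        (Submodule.restrictScalars K (I : Submodule (MvPolynomial σ K) (MvPolynomial σ K))))) =
      E.card := by
  have hker : LinearMap.ker (coeffsOn K w n E) = Submodule.comap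
      (weightedHomogeneousSubmodule K w n).subtype
      (Submodule.restrictScalars K (I : Submodule (MvPolynomial σ K) (MvPolynomial σ K))) := by
    ext ⟨p, hp⟩
    simp only [LinearMap.mem_ker, Submodule.mem_comap, Submodule.subtype_apply,
      Submodule.restrictScalars_mem, hI, _root_.funext_iff, Subtype.forall]
    refine ⟨fun h m hm => ?_, fun h m hm => ?_⟩
    · by_contra hmT
      exact mem_support_iff.mp hm (h m ((hE m).2 ⟨hmT, hp (mem_support_iff.mp hm)⟩))
    · by_contra hc
      exact ((hE m).1 hm).1 (h (mem_support_iff.mpr hc))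
  have e := (coeffsOn K w n E).quotKerEquivOfSurjective
    (coeffsOn_surjective w n E fun m hm => ((hE m).1 hm).2)
  rw [← hker, e.finrank_eq, Module.finrank_fintype_fun_eq_card, Fintype.card_coe]

end MonomialQuotient

theorem Finsupp.single_add_single_le_iff {σ : Type*} {i j : σ} (hij : i ≠ j) (a b : ℕ)
    (m : σ →₀ ℕ) : Finsupp.single i a + Finsupp.single j b ≤ m ↔ a ≤ m i ∧ b ≤ m j := by
  refine ⟨fun h => ⟨by simpa [hij.symm] using h i, by simpa [hij] using h j⟩, ?_⟩
  rintro ⟨ha, hb⟩ k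
  by_cases hi : i = k <;> by_cases hj : j = k <;> simp_all

theorem exIdeal_eq_span_monomial : exIdeal = Ideal.span ((fun s => monomial s (1 : ℚ)) ''
    {Finsupp.single 0 2, Finsupp.single 0 1 + Finsupp.single 1 1,
      Finsupp.single 0 1 + Finsupp.single 2 1, Finsupp.single 2 2}) := by
  simp only [exIdeal, Set.image_insert_eq, Set.image_singleton, monomial_add_single,
    ← X_pow_eq_monomial, pow_one]

def exIdealExponents : Set (Fin 3 →₀ ℕ) :=
  {m | 2 ≤ m 0 ∨ (1 ≤ m 0 ∧ 1 ≤ m 1) ∨ (1 ≤ m 0 ∧ 1 ≤ m 2) ∨ 2 ≤ m 2}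

theorem mem_exIdeal_iff {p : MvPolynomial (Fin 3) ℚ} :
    p ∈ exIdeal ↔ ↑p.support ⊆ exIdealExponents := by
  rw [exIdeal_eq_span_monomial, mem_ideal_span_monomial_image]
  refine forall₂_congr fun m _ => ?_
  simp [exIdealExponents, Finsupp.single_le_iff, Finsupp.single_add_single_le_iff]

theorem weight_exGrading (m : Fin 3 →₀ ℕ) :
    Finsupp.weight ![2, 2, 5] m = 2 * m 0 + 2 * m 1 + 5 * m 2 := by
  simp [Finsupp.weight_apply, Finsupp.sum_fintype, Fin.sum_univ_three, mul_comm]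

noncomputable def exStandardExponents (n : ℕ) : Finset (Fin 3 →₀ ℕ) :=
  (if 2 ∣ n then {Finsupp.single 1 (n / 2)} else ∅) ∪
    (if n = 2 then {Finsupp.single 0 1} else ∅) ∪
    (if ¬ 2 ∣ n ∧ 5 ≤ n then {Finsupp.single 1 ((n - 5) / 2) + Finsupp.single 2 1} else ∅)

theorem mem_exStandardExponents {n : ℕ} {m : Fin 3 →₀ ℕ} :
    m ∈ exStandardExponents n ↔ m ∉ exIdealExponents ∧ Finsupp.weight ![2, 2, 5] m = n := by
  simp only [exStandardExponents, Finset.mem_union]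
  split_ifs <;> simp [Finsupp.ext_iff, Fin.forall_fin_succ, weight_exGrading,
    exIdealExponents, Finsupp.single_apply] <;> omega

theorem card_exStandardExponents (n : ℕ) : (exStandardExponents n).card =
    (if 2 ∣ n then 1 else 0) + (if n = 2 then 1 else 0) + (if ¬ 2 ∣ n ∧ 5 ≤ n then 1 else 0) := by
  rw [exStandardExponents, Finset.card_union_of_disjoint, Finset.card_union_of_disjoint]
  all_goals split_ifs <;> simp_all [Finsupp.ext_iff, Fin.forall_fin_succ, Finsupp.single_apply]

theorem gradedPieceDim_exIdeal (n : ℕ) :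
    gradedPieceDim exIdeal ![2, 2, 5] n = (exStandardExponents n).card :=
  finrank_weightedHomogeneousSubmodule_quotient _ _ _ _ (fun _ => mem_exIdeal_iff) _
    fun _ => mem_exStandardExponents

theorem hasSum_ite_pow_of_iff_exists {𝕜 : Type*} [NormedDivisionRing 𝕜] [CompleteSpace 𝕜]
    {t : 𝕜} (ht : ‖t‖ < 1) (a : ℕ) (P : ℕ → Prop) [DecidablePred P]
    (hP : ∀ n, P n ↔ ∃ k, n = 2 * k + a) :
    HasSum (fun n => if P n then t ^ n else 0) (t ^ a * (1 - t ^ 2)⁻¹) := by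
  have hg : Function.Injective (fun k : ℕ => 2 * k + a) := fun k l h => by simp_all
  rw [← hg.hasSum_iff fun n hn => if_neg fun h => hn (by simpa [eq_comm] using (hP n).1 h)]
  have hsq : ‖t ^ 2‖ < 1 := by rw [norm_pow]; nlinarith [norm_nonneg t]
  refine ((hasSum_geometric_of_norm_lt_one hsq).mul_left (t ^ a)).congr_fun fun k => ?_
  simp [hP, ← pow_mul, ← pow_add, add_comm]

theorem hasSum_exHilbertSeries {t : ℝ} (ht : |t| < 1) :
    HasSum (fun n => (gradedPieceDim exIdeal ![2, 2, 5] n : ℝ) * t ^ n)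
      ((1 + t ^ 5) / (1 - t ^ 2) + t ^ 2) := by
  have heven := hasSum_ite_pow_of_iff_exists (t := t) ht 0 (2 ∣ ·) fun n =>
    ⟨fun ⟨k, hk⟩ => ⟨k, by omega⟩, fun ⟨k, hk⟩ => ⟨k, by omega⟩⟩
  have hodd := hasSum_ite_pow_of_iff_exists (t := t) ht 5 (fun n => ¬ 2 ∣ n ∧ 5 ≤ n) fun n =>
    ⟨fun ⟨hn, h5⟩ => ⟨(n - 5) / 2, by omega⟩, fun ⟨k, hk⟩ => ⟨by omega, by omega⟩⟩
  have hval : (1 + t ^ 5) / (1 - t ^ 2) + t ^ 2 =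
      t ^ 0 * (1 - t ^ 2)⁻¹ + t ^ 2 + t ^ 5 * (1 - t ^ 2)⁻¹ := by
    have : 1 - t ^ 2 ≠ 0 := by nlinarith [abs_lt.1 ht]
    field_simp
    ring
  rw [hval]
  refine ((heven.add (hasSum_ite_eq 2 (t ^ 2))).add hodd).congr_fun fun n => ?_
  rw [gradedPieceDim_exIdeal, card_exStandardExponents]
  split_ifs <;> subst_vars <;> push_cast <;> ring

local notation "π" => Ideal.Quotient.mk exIdeal

theorem X_mul_X_zero_mem_exIdeal (i : Fin 3) : X i * X 0 ∈ exIdeal := by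
  fin_cases i <;> exact Ideal.subset_span (by simp [sq, mul_comm (X 0 : MvPolynomial (Fin 3) ℚ)])

theorem isNilpotent_mk_X {i : Fin 3} (hi : i ≠ 1) : IsNilpotent (π (X i)) := by
  refine ⟨2, ?_⟩
  rw [← map_pow, Ideal.Quotient.eq_zero_iff_mem]
  fin_cases i <;> first | exact absurd rfl hi | exact Ideal.subset_span (by simp)

theorem exMax_le_annihilator : exMax ≤ (Submodule.span ExRing {π (X 0)}).annihilator := by
  rw [exMax, Ideal.span_le]
  rintro _ (rfl | rfl | rfl) <;>
    rw [SetLike.mem_coe, Submodule.mem_annihilator_span_singleton, smul_eq_mul, ← map_mul,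
      Ideal.Quotient.eq_zero_iff_mem] <;>
    exact X_mul_X_zero_mem_exIdeal _

theorem mk_X_zero_ne_zero : π (X 0) ≠ 0 := by
  simp [Ideal.Quotient.eq_zero_iff_mem, mem_exIdeal_iff, support_X, exIdealExponents]

theorem not_isSMulRegular_of_mem_exMax {r : ExRing} (hr : r ∈ exMax) :
    ¬ IsSMulRegular ExRing r := fun hreg => mk_X_zero_ne_zero <| hreg <| by
  change r • π (X 0) = r • 0
  rw [smul_zero, (Submodule.mem_annihilator_span_singleton _ _).1 (exMax_le_annihilator hr)]

theorem radical_exMax : exMax.radical = (Ideal.span {π (X 1)}).radical := by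
  refine le_antisymm ?_ (Ideal.radical_mono (Ideal.span_le.2 ?_))
  · rw [Ideal.radical_le_radical_iff, exMax, Ideal.span_le]
    rintro _ (rfl | rfl | rfl)
    · exact Ideal.radical_mono bot_le (mem_nilradical.2 (isNilpotent_mk_X (by decide)))
    · exact Ideal.le_radical (Ideal.subset_span rfl)
    · exact Ideal.radical_mono bot_le (mem_nilradical.2 (isNilpotent_mk_X (by decide)))
  · rintro _ rfl
    exact Ideal.subset_span (by simp)

theorem mem_exIdealExponents_of_single_one_add {k : ℕ} {m : Fin 3 →₀ ℕ}
    (h : Finsupp.single 1 k + m ∈ exIdealExponents) (hm : m ≠ Finsupp.single 0 1) :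
    m ∈ exIdealExponents := by
  simp [exIdealExponents, Finsupp.ext_iff, Fin.forall_fin_succ, Finsupp.single_apply] at *
  omega

theorem mk_mem_span_of_X_one_pow_mul_mem {k : ℕ} {q : MvPolynomial (Fin 3) ℚ}
    (h : X 1 ^ k * q ∈ exIdeal) : π q ∈ Submodule.span ExRing {π (X 0)} := by
  set c := coeff (Finsupp.single 0 1) q
  have hq : q - monomial (Finsupp.single 0 1) c ∈ exIdeal := by
    rw [mem_exIdeal_iff] at h ⊢
    intro m hm
    have hmu : m ≠ Finsupp.single 0 1 := by rintro rfl; simp [c] at hm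
    have hcoeff : coeff m q ≠ 0 := by simpa [coeff_monomial, Ne.symm hmu] using hm
    refine mem_exIdealExponents_of_single_one_add (k := k) (h ?_) hmu
    rwa [Finset.mem_coe, mem_support_iff, X_pow_eq_monomial, coeff_monomial_mul, one_mul]
  rw [Submodule.mem_span_singleton]
  exact ⟨π (C c), by rw [smul_eq_mul, ← map_mul, C_mul_X_eq_monomial, Ideal.Quotient.eq.2 hq]⟩

theorem exTorsion_eq_span : exTorsion = Submodule.span ExRing {π (X 0)} := by
  refine le_antisymm (iSup_le fun j x hx => ?_) ?_
  · obtain ⟨q, rfl⟩ := Ideal.Quotient.mk_surjective x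
    have hv : π (X 1) ^ j ∈ exMax ^ j := Ideal.pow_mem_pow (Ideal.subset_span (by simp)) j
    refine mk_mem_span_of_X_one_pow_mul_mem (k := j) ?_
    rw [← Ideal.Quotient.eq_zero_iff_mem, map_mul, map_pow]
    exact (Submodule.mem_torsionBySet_iff _ _).1 hx ⟨_, hv⟩
  · rw [Submodule.span_le, Set.singleton_subset_iff]
    refine (le_iSup _ 1 : _ ≤ exTorsion)
      ((Submodule.mem_torsionBySet_iff _ _).2 fun ⟨a, ha⟩ => ?_)
    exact (Submodule.mem_annihilator_span_singleton _ _).1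
      (exMax_le_annihilator (by simpa using ha))

theorem ringKrullDim_quotient_of_le_nilradical {R : Type*} [CommRing R] {I : Ideal R}
    (h : I ≤ nilradical R) : ringKrullDim (R ⧸ I) = ringKrullDim R := by
  rw [ringKrullDim_quotient, (PrimeSpectrum.zeroLocus_eq_univ_iff _).2 h]
  exact Order.krullDim_eq_of_orderIso OrderIso.Set.univ

noncomputable def evalV : MvPolynomial (Fin 3) ℚ →ₐ[ℚ] Polynomial ℚ :=
  aeval ![0, Polynomial.X, 0]

theorem exIdeal_le_ker_evalV : exIdeal ≤ RingHom.ker evalV := by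
  rw [exIdeal, Ideal.span_le]
  rintro _ (rfl | rfl | rfl | rfl) <;> simp [evalV]

theorem lift_evalV_surjective :
    Function.Surjective (Ideal.Quotient.lift exIdeal evalV.toRingHom exIdeal_le_ker_evalV) :=
  fun f => ⟨π (Polynomial.aeval (X 1) f), by simp [evalV, ← Polynomial.aeval_algHom_apply]⟩

theorem aeval_mk_X_one_surjective : Function.Surjective
    (Polynomial.aeval (R := ℚ) (Ideal.Quotient.mk (nilradical ExRing) (π (X 1)))) := by
  have h : (Polynomial.aeval (Ideal.Quotient.mk (nilradical ExRing) (π (X 1)))).comp evalV =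
      (Ideal.Quotient.mkₐ ℚ _).comp (Ideal.Quotient.mkₐ ℚ exIdeal) := by
    refine MvPolynomial.algHom_ext fun i => ?_
    fin_cases i <;> simp [evalV, eq_comm (a := (0 : ExRing ⧸ _)), Ideal.Quotient.eq_zero_iff_mem,
      mem_nilradical, isNilpotent_mk_X]
  refine Function.Surjective.of_comp (g := evalV) ?_
  rw [← AlgHom.coe_comp, h]
  exact Ideal.Quotient.mk_surjective.comp Ideal.Quotient.mk_surjective

theorem ringKrullDim_exRing : ringKrullDim ExRing = 1 := by
  have hpoly : ringKrullDim (Polynomial ℚ) = 1 :=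
    IsPrincipalIdealRing.ringKrullDim_eq_one _ (Polynomial.not_isField ℚ)
  refine le_antisymm ?_ ?_
  · rw [← ringKrullDim_quotient_of_le_nilradical le_rfl, ← hpoly]
    exact ringKrullDim_le_of_surjective _ aeval_mk_X_one_surjective
  · rw [← hpoly]
    exact ringKrullDim_le_of_surjective _ lift_evalV_surjective

/-- The ring `A = ℚ[u,v,p]/(u², uv, up, p²)` with `|u| = |v| = 2`,
`|p| = 5` has Hilbert series `p_X(t) = (1+t⁵)/(1−t²) + t²`; the radical of its maximal
ideal `m` of positive-degree elements equals the radical of `(v)`; its zeroth local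
cohomology `H^0_m(A) = Γ_m(A)` is spanned by the (nonzero) class of `u` — in particular
one-dimensional, concentrated in degree 2 — and `A` is not Cohen–Macaulay
(depth `0 <` dimension `1`). -/
theorem stmt14 :
    (∀ t : ℝ, |t| < 1 →
        ∑' n : ℕ, ((gradedPieceDim exIdeal ![2, 2, 5] n : ℝ)) * t ^ n =
          (1 + t ^ 5) / (1 - t ^ 2) + t ^ 2) ∧
      exMax.radical = (Ideal.span {Ideal.Quotient.mk exIdeal (X 1)}).radical ∧
      exTorsion = Submodule.span ExRing {Ideal.Quotient.mk exIdeal (X 0)} ∧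
      Ideal.Quotient.mk exIdeal (X 0) ≠ 0 ∧
      ringKrullDim ExRing = 1 ∧
      (∀ r ∈ exMax, ¬ IsSMulRegular ExRing r) :=
  ⟨fun _ ht => (hasSum_exHilbertSeries ht).tsum_eq, radical_exMax, exTorsion_eq_span,
    mk_X_zero_ne_zero, ringKrullDim_exRing, fun _ => not_isSMulRegular_of_mem_exMax⟩
end
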